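/- arXiv:2006.12043 — 2 statements merged into one kernel-verified Lean document; each statement's English description precedes it below -/
import Mathlib

section
/- Let K be a field of characteristic 0 and A = ⊕_{i=0}^n A^i a finite-dimensional graded commutative K-algebra which is generated as a K-algebra by A^1, has dim_K A^0 = dim_K A^n = 1 with the unit in A^0, and such that for each 0 ≤ i ≤ n the multiplication pairing A^i × A^{n−i} → A^n is non-degenerate. Let ρ: K^r → A^1 be any surjective K-linear map, fix a K-linear isomorphism φ: A^n → K, and let f ∈ K[x_1,…,x_r] be the unique polynomial with f(a) = φ(ρ(a)^n) for all a ∈ K^r (a homogeneous polynomial of degree n). Then A is isomorphic as a graded K-algebra to K[t_1,…,t_r]/Ann(f), where each t_i has degree 1 and Ann(f) = {p ∈ K[t_1,…,t_r] : p(∂/∂x_1,…,∂/∂x_r) f = 0}. -/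
/-!
Put `vᵢ = ρ(eᵢ)` and `ψ = aeval v : K[t] → A`, a graded map which is surjective because `A` is
generated by `A¹ = span v`. Let `L = Φ ∘ ψ`, where `Φ(x) = φ(xₙ)` reads off the top-degree
component. Expanding `f(a) = L((∑ aᵢ tᵢ)ⁿ)` by the multinomial theorem gives
`β! f_β = n! L(t^β)`, and differentiating term by term then gives
`β! (p(∂) f)_β = n! L(p t^β)`. So `p(∂) f = 0` iff `Φ(ψ p · y) = 0` for every `y ∈ A`, and by
the non-degeneracy of the pairings `Aⁱ × A^{n-i} → Aⁿ` this means `ψ p = 0`.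
-/

open MvPolynomial

/-- The iterated partial derivative `∂^α = ∂₁^{α₁} ⋯ ∂ᵣ^{αᵣ}` applied to a polynomial
(the partial derivatives commute, so the order of application is immaterial). -/
noncomputable def iterPDeriv {K : Type*} [CommSemiring K] {r : ℕ}
    (α : Fin r →₀ ℕ) (f : MvPolynomial (Fin r) K) : MvPolynomial (Fin r) K :=
  (List.finRange r).foldr (fun i g => (fun h => MvPolynomial.pderiv i h)^[α i] g) f

/-- The constant-coefficient differential operator `p(∂/∂x₁, …, ∂/∂xᵣ)` obtained from a
polynomial `p` by substituting `∂/∂xᵢ` for `tᵢ`, applied to the polynomial `f`. -/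
noncomputable def diffOpApply {K : Type*} [CommSemiring K] {r : ℕ}
    (p f : MvPolynomial (Fin r) K) : MvPolynomial (Fin r) K :=
  ∑ α ∈ p.support, p.coeff α • iterPDeriv α f

section DiffOp

variable {K : Type*} [CommSemiring K] {r : ℕ}

def multiFactorial (β : Fin r →₀ ℕ) : ℕ := ∏ i, (β i).factorial

lemma multiFactorial_ne_zero (β : Fin r →₀ ℕ) : multiFactorial β ≠ 0 :=
  Finset.prod_ne_zero_iff.mpr fun i _ => Nat.factorial_ne_zero (β i)

lemma multiFactorial_add_single_one (β : Fin r →₀ ℕ) (i : Fin r) :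
    multiFactorial (β + Finsupp.single i 1) = multiFactorial β * (β i + 1) := by
  simp only [multiFactorial, Fintype.prod_eq_mul_prod_compl i, Finsupp.add_apply,
    Finsupp.single_eq_same, Nat.factorial_succ]
  rw [Finset.prod_congr rfl fun j hj => by
    rw [Finsupp.single_eq_of_ne (by simpa [eq_comm] using hj), add_zero]]
  ring

lemma multiFactorial_mul_coeff_iterate_pderiv (i : Fin r) (m : ℕ) (β : Fin r →₀ ℕ)
    (g : MvPolynomial (Fin r) K) :
    (multiFactorial β : K) * coeff β ((fun h => pderiv i h)^[m] g) =
      multiFactorial (β + Finsupp.single i m) * coeff (β + Finsupp.single i m) g := by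
  induction m generalizing g with
  | zero => simp
  | succ m ih =>
    rw [Function.iterate_succ_apply, ih, coeff_pderiv, Finsupp.single_add, ← add_assoc,
      multiFactorial_add_single_one]
    simp only [Finsupp.add_apply, Finsupp.single_eq_same]
    push_cast
    ring

lemma multiFactorial_mul_coeff_iterPDeriv (γ β : Fin r →₀ ℕ) (g : MvPolynomial (Fin r) K) :
    (multiFactorial β : K) * coeff β (iterPDeriv γ g) =
      multiFactorial (β + γ) * coeff (β + γ) g := by
  have key : ∀ (l : List (Fin r)) (β : Fin r →₀ ℕ),
      (multiFactorial β : K) *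
          coeff β (l.foldr (fun i g => (fun h => pderiv i h)^[γ i] g) g) =
        multiFactorial (β + (l.map fun i => Finsupp.single i (γ i)).sum) *
          coeff (β + (l.map fun i => Finsupp.single i (γ i)).sum) g := by
    intro l
    induction l with
    | nil => simp
    | cons i l ih =>
      intro β
      rw [List.foldr_cons, multiFactorial_mul_coeff_iterate_pderiv, ih, List.map_cons,
        List.sum_cons, add_assoc]
  rw [iterPDeriv, key, ← Fin.sum_univ_def, Finsupp.univ_sum_single]

lemma multiFactorial_mul_coeff_diffOpApply (p g : MvPolynomial (Fin r) K) (β : Fin r →₀ ℕ) :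
    (multiFactorial β : K) * coeff β (diffOpApply p g) =
      ∑ γ ∈ p.support, coeff γ p * (multiFactorial (β + γ) * coeff (β + γ) g) := by
  simp only [diffOpApply, coeff_sum, coeff_smul, smul_eq_mul, Finset.mul_sum,
    ← multiFactorial_mul_coeff_iterPDeriv]
  exact Finset.sum_congr rfl fun γ _ => by ring

end DiffOp

section InverseSystem

variable {K : Type*} {r : ℕ}

lemma monomial_eq_smul_monomial_one {σ : Type*} [CommSemiring K] (s : σ →₀ ℕ) (a : K) :
    monomial s a = a • monomial s 1 := by
  rw [smul_monomial, smul_eq_mul, mul_one]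

theorem multiFactorial_mul_coeff_diffOpApply_eq [CommSemiring K]
    (L : MvPolynomial (Fin r) K →ₗ[K] K) (c : K) {f : MvPolynomial (Fin r) K}
    (hf : ∀ k, (multiFactorial k : K) * coeff k f = c * L (monomial k 1))
    (p : MvPolynomial (Fin r) K) (β : Fin r →₀ ℕ) :
    (multiFactorial β : K) * coeff β (diffOpApply p f) = c * L (p * monomial β 1) := by
  rw [multiFactorial_mul_coeff_diffOpApply]
  conv_rhs => rw [p.as_sum, Finset.sum_mul, map_sum, Finset.mul_sum]
  refine Finset.sum_congr rfl fun γ _ => ?_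
  rw [hf, monomial_mul, mul_one, monomial_eq_smul_monomial_one (γ + β), map_smul, add_comm γ β,
    smul_eq_mul]
  ring

theorem diffOpApply_eq_zero_iff [Field K] [CharZero K]
    (L : MvPolynomial (Fin r) K →ₗ[K] K) {c : K} (hc : c ≠ 0) {f : MvPolynomial (Fin r) K}
    (hf : ∀ k, (multiFactorial k : K) * coeff k f = c * L (monomial k 1))
    (p : MvPolynomial (Fin r) K) :
    diffOpApply p f = 0 ↔ ∀ q, L (p * q) = 0 := by
  have key := multiFactorial_mul_coeff_diffOpApply_eq L c hf p
  constructor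
  · intro hp q
    have hmon : ∀ β, L (p * monomial β 1) = 0 := fun β => by
      simpa [hp, hc] using (key β).symm
    rw [q.as_sum, Finset.mul_sum, map_sum]
    refine Finset.sum_eq_zero fun β _ => ?_
    rw [monomial_eq_smul_monomial_one, mul_smul_comm, map_smul, hmon, smul_zero]
  · intro hq
    ext β
    have := key β
    rw [hq, mul_zero] at this
    simpa [multiFactorial_ne_zero] using this

theorem multiFactorial_mul_coeff_eq_of_eval_eq [Field K] [Infinite K]
    (L : MvPolynomial (Fin r) K →ₗ[K] K) (n : ℕ)
    (hL : ∀ k : Fin r →₀ ℕ, k.degree ≠ n → L (monomial k 1) = 0) {f : MvPolynomial (Fin r) K}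
    (hf : ∀ a, eval a f = L ((∑ i, a i • X i) ^ n)) (k : Fin r →₀ ℕ) :
    (multiFactorial k : K) * coeff k f = n.factorial * L (monomial k 1) := by
  set e := (Finsupp.equivFunOnFinite : (Fin r →₀ ℕ) ≃ (Fin r → ℕ))
  have hf_eq : f = ∑ l ∈ Finset.piAntidiag Finset.univ n,
      monomial (e.symm l) (Nat.multinomial Finset.univ l * L (monomial (e.symm l) 1)) := by
    refine MvPolynomial.funext fun a => ?_
    rw [hf, Finset.sum_pow_eq_sum_piAntidiag, map_sum, map_sum]
    refine Finset.sum_congr rfl fun l _ => ?_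
    have hprod : ∏ i, (a i • X i : MvPolynomial (Fin r) K) ^ l i
        = (∏ i, a i ^ l i) • monomial (e.symm l) 1 := by
      simp_rw [smul_pow, Finset.prod_smul, monomial_eq, C_1, one_mul,
        Finsupp.prod_fintype _ _ (fun i => pow_zero _)]
      rfl
    rw [hprod, ← nsmul_eq_mul, map_nsmul, map_smul, eval_monomial,
      Finsupp.prod_fintype _ _ (fun i => pow_zero _)]
    simp only [e, Finsupp.coe_equivFunOnFinite_symm, nsmul_eq_mul, smul_eq_mul]
    ring
  have hcoeff : coeff k f = if k.degree = n
      then Nat.multinomial Finset.univ k * L (monomial k 1) else 0 := by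
    simp only [hf_eq, coeff_sum, coeff_monomial, Equiv.symm_apply_eq]
    simp only [Finset.sum_ite_eq', Finset.mem_piAntidiag, Finsupp.equivFunOnFinite_apply,
      Finset.mem_univ, implies_true, and_true, Equiv.symm_apply_apply, Finsupp.degree_eq_sum, e]
    rfl
  by_cases hk : k.degree = n
  · rw [hcoeff, if_pos hk, ← mul_assoc, ← Nat.cast_mul, multiFactorial, Nat.multinomial_spec,
      ← Finsupp.degree_eq_sum, hk]
  · rw [hcoeff, if_neg hk, hL k hk, mul_zero, mul_zero]

theorem isHomogeneous_of_multiFactorial_mul_coeff_eq [Field K] [CharZero K]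
    (L : MvPolynomial (Fin r) K →ₗ[K] K) (c : K) (n : ℕ)
    (hL : ∀ k : Fin r →₀ ℕ, k.degree ≠ n → L (monomial k 1) = 0) {f : MvPolynomial (Fin r) K}
    (hf : ∀ k, (multiFactorial k : K) * coeff k f = c * L (monomial k 1)) :
    f.IsHomogeneous n := by
  intro k hk
  rw [Pi.one_def, ← Finsupp.degree_eq_weight_one]
  by_contra hdeg
  have := hf k
  rw [hL k hdeg, mul_zero] at this
  exact hk (by simpa [multiFactorial_ne_zero] using this)

end InverseSystem

section Graded

variable {K A : Type*}

section Generators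

variable [CommSemiring K] [CommSemiring A] [Algebra K A] {r : ℕ} (ρ : (Fin r → K) →ₗ[K] A)

lemma eq_aeval_sum_smul_X (a : Fin r → K) :
    ρ a = aeval (fun i => ρ (Pi.single i 1)) (∑ i, a i • X i : MvPolynomial (Fin r) K) := by
  conv_lhs => rw [pi_eq_sum_univ' a]
  simp only [map_sum, map_smul, aeval_X]

lemma aeval_surjective_of_adjoin_range_eq_top
    (h : Algebra.adjoin K (LinearMap.range ρ : Set A) = ⊤) :
    Function.Surjective (aeval (R := K) fun i => ρ (Pi.single i 1)) := by
  rw [← AlgHom.range_eq_top, eq_top_iff, ← h, Algebra.adjoin_le_iff]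
  rintro _ ⟨a, rfl⟩
  exact ⟨_, (eq_aeval_sum_smul_X ρ a).symm⟩

end Generators

theorem aeval_mem_of_isHomogeneous {σ : Type*} [CommSemiring K] [CommSemiring A] [Algebra K A]
    (𝒜 : ℕ → Submodule K A) [SetLike.GradedMonoid 𝒜] {v : σ → A} (hv : ∀ i, v i ∈ 𝒜 1)
    {p : MvPolynomial σ K} {d : ℕ} (hp : p.IsHomogeneous d) : aeval v p ∈ 𝒜 d := by
  rw [p.as_sum, map_sum]
  refine Submodule.sum_mem _ fun α hα => ?_
  rw [aeval_monomial, ← Algebra.smul_def, ← hp (mem_support_iff.mp hα)]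
  exact Submodule.smul_mem _ _ (SetLike.prod_pow_mem_graded 𝒜 _ _ _ fun i _ => hv i)

variable [Field K] [CommRing A] [Algebra K A] (𝒜 : ℕ → Submodule K A) [GradedAlgebra 𝒜]

def componentForm (n : ℕ) (φ : 𝒜 n →ₗ[K] K) : A →ₗ[K] K :=
  φ ∘ₗ DirectSum.component K ℕ (fun i => 𝒜 i) n ∘ₗ (DirectSum.decomposeLinearEquiv 𝒜).toLinearMap

variable {𝒜} {n : ℕ} {φ : 𝒜 n →ₗ[K] K}

lemma componentForm_apply (x : A) : componentForm 𝒜 n φ x = φ (DirectSum.decompose 𝒜 x n) :=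
  rfl

lemma componentForm_of_mem {x : A} (hx : x ∈ 𝒜 n) : componentForm 𝒜 n φ x = φ ⟨x, hx⟩ := by
  rw [componentForm_apply, DirectSum.decompose_of_mem 𝒜 hx, DirectSum.of_eq_same]

lemma componentForm_eq_zero_of_mem {x : A} {m : ℕ} (hx : x ∈ 𝒜 m) (hm : m ≠ n) :
    componentForm 𝒜 n φ x = 0 := by
  rw [componentForm_apply, DirectSum.decompose_of_mem 𝒜 hx, DirectSum.of_eq_of_ne _ _ _ hm.symm,
    map_zero]

theorem eq_zero_of_forall_componentForm_mul_eq_zero (hφ : Function.Injective φ)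
    (hbound : ∀ i, n < i → 𝒜 i = ⊥)
    (hPD : ∀ i ≤ n, ∀ x ∈ 𝒜 i, (∀ y ∈ 𝒜 (n - i), x * y = 0) → x = 0)
    {x : A} (hx : ∀ y, componentForm 𝒜 n φ (x * y) = 0) : x = 0 := by
  suffices h : DirectSum.decompose 𝒜 x = 0 by
    rw [← (DirectSum.decompose 𝒜).symm_apply_apply x, h, DirectSum.decompose_symm_zero]
  ext i
  rw [DirectSum.zero_apply, ZeroMemClass.coe_zero]
  by_cases hi : i ≤ n
  · refine hPD i hi _ (DirectSum.decompose 𝒜 x i).2 fun y hy => ?_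
    have hxy : (DirectSum.decompose 𝒜 (x * y) n : A) = DirectSum.decompose 𝒜 x i * y := by
      rw [DirectSum.coe_decompose_mul_of_right_mem_of_le 𝒜 hy (Nat.sub_le n i),
        Nat.sub_sub_self hi]
    rw [← hxy, ← ZeroMemClass.coe_zero (𝒜 n), Subtype.coe_inj]
    exact hφ (by rw [map_zero, ← componentForm_apply, hx])
  · simpa [hbound i (not_le.mp hi)] using (DirectSum.decompose 𝒜 x i).2

end Graded

theorem stmt2_general {K A : Type*} [Field K] [CharZero K] [CommRing A] [Algebra K A]
    (𝒜 : ℕ → Submodule K A) [GradedAlgebra 𝒜]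
    (n : ℕ)
    (hbound : ∀ i : ℕ, n < i → 𝒜 i = ⊥)
    (hgen : Algebra.adjoin K (𝒜 1 : Set A) = ⊤)
    (hPD : ∀ i ≤ n, ∀ x ∈ 𝒜 i, (∀ y ∈ 𝒜 (n - i), x * y = 0) → x = 0)
    (r : ℕ)
    -- a surjective `K`-linear map `ρ : Kʳ → A¹`:
    (ρ : (Fin r → K) →ₗ[K] A) (hρ : LinearMap.range ρ = 𝒜 1)
    (φ : (𝒜 n) ≃ₗ[K] K)
    (f : MvPolynomial (Fin r) K)
    (hf : ∀ a : Fin r → K, ∀ h : (ρ a) ^ n ∈ 𝒜 n,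
      MvPolynomial.eval a f = φ ⟨(ρ a) ^ n, h⟩) :
    MvPolynomial.IsHomogeneous f n ∧
    ∃ ψ : MvPolynomial (Fin r) K →ₐ[K] A,
      Function.Surjective ψ ∧
      (∀ p : MvPolynomial (Fin r) K, ψ p = 0 ↔ diffOpApply p f = 0) ∧
      (∀ (d : ℕ) (p : MvPolynomial (Fin r) K), MvPolynomial.IsHomogeneous p d → ψ p ∈ 𝒜 d) := by
  set v : Fin r → A := fun i => ρ (Pi.single i 1)
  set L := componentForm 𝒜 n (φ : 𝒜 n →ₗ[K] K) ∘ₗ (aeval v).toLinearMap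
  have hv : ∀ i, v i ∈ 𝒜 1 := fun i => hρ ▸ LinearMap.mem_range_self ρ _
  have hsurj : Function.Surjective (aeval (R := K) v) :=
    aeval_surjective_of_adjoin_range_eq_top ρ (hρ ▸ hgen)
  have hgraded : ∀ d (p : MvPolynomial (Fin r) K), p.IsHomogeneous d → aeval v p ∈ 𝒜 d :=
    fun d p hp => aeval_mem_of_isHomogeneous 𝒜 hv hp
  have hL : ∀ k : Fin r →₀ ℕ, k.degree ≠ n → L (monomial k 1) = 0 := fun k hk =>
    componentForm_eq_zero_of_mem (hgraded _ _ (isHomogeneous_monomial 1 rfl)) hk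
  have hpow : ∀ a, ρ a ^ n ∈ 𝒜 n := fun a => by
    simpa using SetLike.pow_mem_graded n (hρ ▸ LinearMap.mem_range_self ρ a : ρ a ∈ 𝒜 1)
  have hcoeff := multiFactorial_mul_coeff_eq_of_eval_eq L n hL (f := f) fun a => by
    rw [hf a (hpow a), ← LinearEquiv.coe_coe, ← componentForm_of_mem, eq_aeval_sum_smul_X ρ a,
      ← map_pow]
    rfl
  refine ⟨isHomogeneous_of_multiFactorial_mul_coeff_eq L _ n hL hcoeff, aeval v, hsurj,
    fun p => ?_, hgraded⟩
  rw [diffOpApply_eq_zero_iff L (Nat.cast_ne_zero.mpr n.factorial_ne_zero) hcoeff]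
  refine ⟨fun hp q => by simp [L, hp], fun hp => ?_⟩
  refine eq_zero_of_forall_componentForm_mul_eq_zero φ.injective hbound hPD fun y => ?_
  obtain ⟨q, rfl⟩ := hsurj y
  simpa [L] using hp q

/-- Let `K` be a field of characteristic `0` and `A = ⊕_{i=0}^n Aⁱ` a
finite-dimensional graded commutative `K`-algebra generated by `A¹`, with
`dim A⁰ = dim Aⁿ = 1` and non-degenerate multiplication pairings `Aⁱ × A^{n-i} → Aⁿ`.
Let `ρ : Kʳ → A¹` be any surjective `K`-linear map, `φ : Aⁿ ≃ K` a linear isomorphism, and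
`f` the unique polynomial with `f(a) = φ(ρ(a)ⁿ)` for all `a ∈ Kʳ` (homogeneous of degree
`n`).  Then `A` is isomorphic as a graded `K`-algebra to `K[t₁,…,tᵣ]/Ann(f)`, where each
`tᵢ` has degree `1` and `Ann(f) = {p : p(∂/∂x₁,…,∂/∂xᵣ) f = 0}` (the isomorphism being
witnessed by a surjective graded algebra homomorphism `ψ : K[t₁,…,tᵣ] → A` with kernel
exactly `Ann(f)`). -/
theorem stmt2 {K A : Type*} [Field K] [CharZero K] [CommRing A] [Algebra K A]
    (𝒜 : ℕ → Submodule K A) [GradedAlgebra 𝒜] [FiniteDimensional K A]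
    (n : ℕ)
    (hbound : ∀ i : ℕ, n < i → 𝒜 i = ⊥)
    (hgen : Algebra.adjoin K (𝒜 1 : Set A) = ⊤)
    (h0 : Module.finrank K (𝒜 0) = 1)
    (hn : Module.finrank K (𝒜 n) = 1)
    (hPD : ∀ i ≤ n, ∀ x ∈ 𝒜 i, (∀ y ∈ 𝒜 (n - i), x * y = 0) → x = 0)
    (r : ℕ)
    -- a surjective `K`-linear map `ρ : Kʳ → A¹`:
    (ρ : (Fin r → K) →ₗ[K] A) (hρ : LinearMap.range ρ = 𝒜 1)
    (φ : (𝒜 n) ≃ₗ[K] K)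
    (f : MvPolynomial (Fin r) K)
    (hf : ∀ a : Fin r → K, ∀ h : (ρ a) ^ n ∈ 𝒜 n,
      MvPolynomial.eval a f = φ ⟨(ρ a) ^ n, h⟩) :
    MvPolynomial.IsHomogeneous f n ∧
    ∃ ψ : MvPolynomial (Fin r) K →ₐ[K] A,
      Function.Surjective ψ ∧
      (∀ p : MvPolynomial (Fin r) K, ψ p = 0 ↔ diffOpApply p f = 0) ∧
      (∀ (d : ℕ) (p : MvPolynomial (Fin r) K), MvPolynomial.IsHomogeneous p d → ψ p ∈ 𝒜 d) :=
  stmt2_general 𝒜 n hbound hgen hPD r ρ hρ φ f hf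
end

section
/- Let V be a real vector space, m a natural number, and f: V → ℝ a polynomial of degree ≤ m, i.e., D_{v₁}⋯D_{v_{m+1}} f = 0 identically for all v₁,…,v_{m+1} ∈ V and the restriction of f to every finite-dimensional subspace of V is continuous. Let v₁,…,v_n ∈ V be linearly independent. Then D^α f(0) = 0 whenever α₁ + ⋯ + α_n > m, and for all real numbers λ₁,…,λ_n, f(λ₁v₁ + ⋯ + λ_n v_n) = Σ_{α ∈ ℤ_{≥0}^n} D^α f(0) · C(λ₁, α₁) ⋯ C(λ_n, α_n), where D^α = D_{v₁}^{α₁} ⋯ D_{v_n}^{α_n} and C(λ, a) = λ(λ−1)⋯(λ−a+1)/a! is the generalized binomial coefficient (the sum is finite since only multi-indices α with α₁+⋯+α_n ≤ m contribute). -/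
/-- The forward difference operator: `(D_v f)(x) = f(x + v) − f(x)`. -/
def fwdDiffOp {V : Type*} [AddCommGroup V] (v : V) (f : V → ℝ) : V → ℝ :=
  fun x => f (x + v) - f x

/-- The iterated difference operator `D^α = D_{v₁}^{α₁} ⋯ D_{v_n}^{α_n}` with respect to a
family `v : Fin n → V` (the operators `D_{v i}` commute, so the order is immaterial). -/
def iterFwdDiff {V : Type*} [AddCommGroup V] {n : ℕ} (v : Fin n → V) (α : Fin n → ℕ)
    (f : V → ℝ) : V → ℝ :=
  (List.finRange n).foldr (fun i g => (fwdDiffOp (v i))^[α i] g) f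

/-- The generalized binomial coefficient `C(x, a) = x(x−1)⋯(x−a+1)/a!`. -/
noncomputable def genBinom (x : ℝ) (a : ℕ) : ℝ :=
  (∏ j ∈ Finset.range a, (x - j)) / (Nat.factorial a)

/-!
Restricted to a line `t ↦ x + t • u`, a continuous `f` whose `(m+1)`-fold differences vanish
agrees on every arithmetic progression with a polynomial of degree `≤ m` (Gregory–Newton). Each
progression `-M + ℕ/b` contains `0, …, m`, where it meets the progression `ℕ`, so all these
polynomials coincide; continuity and density of `ℚ` then give
`f (x + t • u) = ∑ₖ C(t, k) Δ_uᵏ f x`. Applying this one coordinate at a time, to `f` and to its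
differences, yields the expansion of `f ∘ ι` on `ℝⁿ`, where `ι λ = ∑ λᵢ vᵢ` is injective by linear
independence. The vanishing of `D^α f` for `|α| > m` is the hypothesis itself, `D^α` being a
composite of `|α|` difference operators.
-/

open Finset Polynomial fwdDiff
open scoped Nat

section Newton

lemma fwdDiff_iterate_eq_zero_of_lt {M : Type*} [AddCommMonoid M] {m k : ℕ} {s : M}
    {h : M → ℝ} (hvan : (Δ_[s])^[m + 1] h = 0) (hk : m < k) : (Δ_[s])^[k] h = 0 := by
  obtain ⟨j, rfl⟩ := Nat.exists_eq_add_of_le hk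
  rw [add_comm, Function.iterate_add_apply, hvan]
  exact Function.iterate_fixed (fwdDiff_const s (0 : ℝ)) j

noncomputable def newtonPoly (m : ℕ) (d : ℕ → ℝ) : ℝ[X] :=
  ∑ k ∈ range (m + 1), C (d k / k !) * descPochhammer ℝ k

lemma genBinom_eq_eval_descPochhammer (x : ℝ) (a : ℕ) :
    genBinom x a = (descPochhammer ℝ a).eval x / a ! := by
  rw [genBinom, descPochhammer_eval_eq_prod_range]

lemma genBinom_natCast (N a : ℕ) : genBinom N a = N.choose a := by
  rw [genBinom_eq_eval_descPochhammer, Nat.cast_choose_eq_descPochhammer_div]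

lemma newtonPoly_eval (m : ℕ) (d : ℕ → ℝ) (t : ℝ) :
    (newtonPoly m d).eval t = ∑ k ∈ range (m + 1), d k * genBinom t k := by
  simp only [newtonPoly, eval_finsetSum, eval_mul, eval_C, genBinom_eq_eval_descPochhammer]
  exact sum_congr rfl fun k _ => by ring

lemma natDegree_newtonPoly_le (m : ℕ) (d : ℕ → ℝ) : (newtonPoly m d).natDegree ≤ m := by
  refine natDegree_sum_le_of_forall_le _ _ fun k hk => ?_
  refine (natDegree_C_mul_le _ _).trans ?_
  rw [descPochhammer_natDegree]
  exact Nat.lt_succ_iff.mp (mem_range.mp hk)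

/-- Truncated Gregory–Newton formula. -/
lemma shift_eq_newtonPoly_eval {M : Type*} [AddCommMonoid M] {m : ℕ} {s : M} {h : M → ℝ}
    (hvan : (Δ_[s])^[m + 1] h = 0) (x : M) (N : ℕ) :
    h (x + N • s) = (newtonPoly m fun k => (Δ_[s])^[k] h x).eval (N : ℝ) := by
  have hextend : ∀ K, min N m ≤ K → K ≤ N + m →
      ∑ k ∈ range (K + 1), (Δ_[s])^[k] h x * N.choose k =
        ∑ k ∈ range (N + m + 1), (Δ_[s])^[k] h x * N.choose k := by
    intro K hK hK'
    refine sum_subset (range_subset_range.mpr (by omega)) fun k _ hk => ?_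
    rcases le_or_gt k N with hkN | hkN
    · rw [fwdDiff_iterate_eq_zero_of_lt hvan (by simp at hk; omega), Pi.zero_apply, zero_mul]
    · rw [Nat.choose_eq_zero_of_lt hkN, Nat.cast_zero, mul_zero]
  rw [shift_eq_sum_fwdDiff_iter s h N x, newtonPoly_eval]
  simp only [genBinom_natCast, nsmul_eq_mul, mul_comm (Nat.choose _ _ : ℝ)]
  rw [hextend N (min_le_left N m) (by omega), hextend m (min_le_right N m) (by omega)]

lemma Rat.exists_cast_eq_neg_add_div (q : ℚ) : ∃ M N : ℕ, (q : ℝ) = -M + N / q.den := by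
  set M := q.num.natAbs
  have hnonneg : 0 ≤ q.num + q.den * M := by
    have : -q.num ≤ M := by omega
    nlinarith [q.den_pos]
  refine ⟨M, (q.num + q.den * M).toNat, ?_⟩
  have hN : (((q.num + q.den * M).toNat : ℤ) : ℝ) = q.num + q.den * M := by
    rw [Int.toNat_of_nonneg hnonneg]; push_cast; ring
  rw [Int.cast_natCast] at hN
  rw [hN, Rat.cast_def]
  field_simp
  ring

/-- Fréchet's theorem on the line. -/
theorem eq_newtonPoly_eval_of_continuous {m : ℕ} {h : ℝ → ℝ} (hc : Continuous h)
    (hvan : ∀ s, (Δ_[s])^[m + 1] h = 0) :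
    h = (newtonPoly m fun k => (Δ_[1])^[k] h 0).eval := by
  set P := newtonPoly m fun k => (Δ_[1])^[k] h 0
  have hnat : ∀ N : ℕ, h (N : ℝ) = P.eval (N : ℝ) := by
    simpa using shift_eq_newtonPoly_eval (hvan 1) 0
  have hprog : ∀ M N b : ℕ, 0 < b → h (-(M : ℝ) + N / b) = P.eval (-(M : ℝ) + N / b) := by
    intro M N b hb
    have hb' : (b : ℝ) ≠ 0 := by positivity
    set Q := (newtonPoly m fun k => (Δ_[(b : ℝ)⁻¹])^[k] h (-(M : ℝ))).comp
      (C (b : ℝ) * (X + C (M : ℝ)))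
    have hQ : ∀ N : ℕ, h (-(M : ℝ) + N / b) = Q.eval (-(M : ℝ) + N / b) := by
      intro N
      have := shift_eq_newtonPoly_eval (hvan (b : ℝ)⁻¹) (-(M : ℝ)) N
      rw [nsmul_eq_mul, ← div_eq_mul_inv] at this
      rw [this, eval_comp]
      congr 1
      simp only [eval_mul, eval_C, eval_add, eval_X]
      field_simp
      ring
    have hQP : Q = P := by
      refine eq_of_natDegree_lt_card_of_eval_eq Q P (f := fun i : Fin (m + 1) => ((i : ℕ) : ℝ))
        (fun i j hij => Fin.val_injective (Nat.cast_injective hij)) (fun i => ?_) ?_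
      · have hi : -(M : ℝ) + ((b * (M + i) : ℕ) : ℝ) / b = (i : ℕ) := by
          push_cast; field_simp; ring
        rw [← hnat, ← hi, ← hQ]
      · rw [Fintype.card_fin, Nat.lt_succ_iff, max_le_iff]
        refine ⟨natDegree_comp_le.trans ?_, natDegree_newtonPoly_le _ _⟩
        rw [natDegree_C_mul hb', natDegree_X_add_C, mul_one]
        exact natDegree_newtonPoly_le _ _
    rw [hQ, hQP]
  refine Continuous.ext_on Rat.denseRange_cast hc P.continuous ?_
  rintro _ ⟨q, rfl⟩
  obtain ⟨M, N, hq⟩ := Rat.exists_cast_eq_neg_add_div q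
  rw [hq]
  exact hprog M N q.den q.den_pos

end Newton

lemma Fintype.sum_piFinset_const_succ {α β : Type*} [AddCommMonoid β] {n : ℕ} (s : Finset α)
    (F : (Fin (n + 1) → α) → β) :
    ∑ a ∈ Fintype.piFinset (fun _ => s), F a =
      ∑ k ∈ s, ∑ b ∈ Fintype.piFinset (fun _ => s), F (Fin.cons k b) := by
  have := filter_piFinset_eq_map_consEquiv (fun _ : Fin (n + 1) => s) (fun _ => True)
  simp only [filter_true] at this
  rw [this, sum_map, ← sum_product']
  rfl

section FwdDiffDegree

variable {W V : Type*} [AddCommGroup W] [AddCommGroup V]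

lemma foldr_fwdDiff_replicate (u : W) (k : ℕ) (f : W → ℝ) :
    (List.replicate k u).foldr fwdDiff f = (Δ_[u])^[k] f := by
  induction k with
  | zero => rfl
  | succ k ih => rw [List.replicate_succ, List.foldr_cons, ih, Function.iterate_succ_apply']

lemma iterFwdDiff_eq_foldr {n : ℕ} (v : Fin n → W) (α : Fin n → ℕ) (f : W → ℝ) :
    iterFwdDiff v α f =
      ((List.finRange n).flatMap fun i => List.replicate (α i) (v i)).foldr fwdDiff f := by
  simp only [iterFwdDiff, List.foldr_flatMap, foldr_fwdDiff_replicate]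
  rfl

lemma iterFwdDiff_succ {n : ℕ} (v : Fin (n + 1) → W) (α : Fin (n + 1) → ℕ) (f : W → ℝ) :
    iterFwdDiff v α f =
      (Δ_[v 0])^[α 0] (iterFwdDiff (fun i => v i.succ) (fun i => α i.succ) f) := by
  simp only [iterFwdDiff, List.finRange_succ, List.foldr_cons, List.foldr_map]
  rfl

lemma fwdDiff_iterate_comp_of_map_add {M : Type*} [AddCommMonoid M] {e : M → V} {u : M} {w : V}
    (he : ∀ x, e (x + u) = e x + w) (f : V → ℝ) (k : ℕ) :
    (Δ_[u])^[k] (f ∘ e) = ((Δ_[w])^[k] f) ∘ e := by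
  induction k with
  | zero => rfl
  | succ k ih =>
    rw [Function.iterate_succ_apply', Function.iterate_succ_apply', ih]
    funext x
    simp only [fwdDiff, Function.comp_apply, he]

lemma foldr_fwdDiff_comp {F : Type*} [FunLike F W V] [AddMonoidHomClass F W V] (g : F)
    (L : List W) (f : V → ℝ) :
    L.foldr fwdDiff (f ∘ g) = (L.map g).foldr fwdDiff f ∘ g := by
  induction L with
  | nil => rfl
  | cons u L ih =>
    rw [List.foldr_cons, ih, List.map_cons, List.foldr_cons]
    simpa using fwdDiff_iterate_comp_of_map_add (fun x => map_add g x u) _ 1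

lemma iterFwdDiff_comp {F : Type*} [FunLike F W V] [AddMonoidHomClass F W V] (g : F) {n : ℕ}
    (v : Fin n → W) (α : Fin n → ℕ) (f : V → ℝ) :
    iterFwdDiff v α (f ∘ g) = iterFwdDiff (g ∘ v) α f ∘ g := by
  simp only [iterFwdDiff_eq_foldr, foldr_fwdDiff_comp, List.map_flatMap, List.map_replicate,
    Function.comp_apply]

lemma foldr_fwdDiff_zero (L : List W) : L.foldr fwdDiff (0 : W → ℝ) = 0 := by
  induction L with
  | nil => rfl
  | cons u L ih => rw [List.foldr_cons, ih]; exact fwdDiff_const u 0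

def FwdDiffDegreeLE (m : ℕ) (f : W → ℝ) : Prop :=
  ∀ L : List W, m < L.length → L.foldr fwdDiff f = 0

lemma fwdDiffDegreeLE_of_forall_ofFn {m : ℕ} {f : W → ℝ}
    (h : ∀ v : Fin (m + 1) → W, ∀ x, ((List.ofFn v).foldr fwdDiffOp f) x = 0) :
    FwdDiffDegreeLE m f := by
  intro L hL
  set L₂ := L.drop (L.length - (m + 1))
  have hL₂ : L₂.length = m + 1 := by simp only [L₂, List.length_drop]; omega
  have hvanish : L₂.foldr fwdDiff f = 0 := funext fun x => by
    rw [← List.ofFn_get L₂, List.ofFn_congr hL₂]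
    exact h _ x
  rw [← List.take_append_drop (L.length - (m + 1)) L, List.foldr_append, hvanish,
    foldr_fwdDiff_zero]

namespace FwdDiffDegreeLE

variable {m : ℕ} {f : W → ℝ}

lemma foldr (hf : FwdDiffDegreeLE m f) (L : List W) : FwdDiffDegreeLE m (L.foldr fwdDiff f) :=
  fun L' hL' => by
    rw [← List.foldr_append]
    exact hf _ (by rw [List.length_append]; omega)

lemma iterFwdDiff (hf : FwdDiffDegreeLE m f) {n : ℕ} (v : Fin n → W) (α : Fin n → ℕ) :
    FwdDiffDegreeLE m (iterFwdDiff v α f) := by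
  rw [iterFwdDiff_eq_foldr]
  exact hf.foldr _

lemma fwdDiff_iterate_eq_zero (hf : FwdDiffDegreeLE m f) (u : W) : (Δ_[u])^[m + 1] f = 0 := by
  rw [← foldr_fwdDiff_replicate]
  exact hf _ (by rw [List.length_replicate]; omega)

lemma iterFwdDiff_eq_zero (hf : FwdDiffDegreeLE m f) {n : ℕ} (v : Fin n → W) (α : Fin n → ℕ)
    (hα : m < ∑ i, α i) : _root_.iterFwdDiff v α f = 0 := by
  rw [iterFwdDiff_eq_foldr]
  refine hf _ ?_
  simpa [List.length_flatMap, ← Fin.sum_univ_def] using hα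

lemma comp {F : Type*} [FunLike F V W] [AddMonoidHomClass F V W] (hf : FwdDiffDegreeLE m f)
    (g : F) : FwdDiffDegreeLE m (f ∘ g) := fun L hL => by
  rw [foldr_fwdDiff_comp, hf _ (by rwa [List.length_map])]
  rfl

end FwdDiffDegreeLE

end FwdDiffDegree

section Topological

variable {W : Type*} [AddCommGroup W] [TopologicalSpace W] [IsTopologicalAddGroup W]

lemma Continuous.foldr_fwdDiff {f : W → ℝ} (hf : Continuous f) (L : List W) :
    Continuous (L.foldr fwdDiff f) := by
  induction L with
  | nil => exact hf
  | cons u L ih => exact (ih.comp (continuous_add_const u)).sub ih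

lemma Continuous.iterFwdDiff {f : W → ℝ} (hf : Continuous f) {n : ℕ} (v : Fin n → W)
    (α : Fin n → ℕ) : Continuous (iterFwdDiff v α f) := by
  rw [iterFwdDiff_eq_foldr]
  exact hf.foldr_fwdDiff _

namespace FwdDiffDegreeLE

variable [Module ℝ W] [ContinuousSMul ℝ W] {m : ℕ} {f : W → ℝ}

theorem apply_add_smul (hf : FwdDiffDegreeLE m f) (hc : Continuous f) (x u : W) (t : ℝ) :
    f (x + t • u) = ∑ k ∈ range (m + 1), (Δ_[u])^[k] f x * genBinom t k := by
  set e : ℝ → W := fun t => x + t • u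
  have he : ∀ s t, e (t + s) = e t + s • u := fun s t => by
    simp only [e, add_smul, add_assoc]
  have hline := congrFun (eq_newtonPoly_eval_of_continuous (h := f ∘ e) (by fun_prop)
    fun s => by rw [fwdDiff_iterate_comp_of_map_add (he s), hf.fwdDiff_iterate_eq_zero]; rfl) t
  rw [newtonPoly_eval] at hline
  simpa [fwdDiff_iterate_comp_of_map_add (he 1), e] using hline

theorem apply_add_sum_smul (hf : FwdDiffDegreeLE m f) (hc : Continuous f) {n : ℕ} (x : W)
    (u : Fin n → W) (lam : Fin n → ℝ) :
    f (x + ∑ i, lam i • u i) =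
      ∑ α ∈ Fintype.piFinset (fun _ => range (m + 1)),
        _root_.iterFwdDiff u α f x * ∏ i, genBinom (lam i) (α i) := by
  induction n generalizing f x with
  | zero => simp [_root_.iterFwdDiff]
  | succ n ih =>
    calc f (x + ∑ i, lam i • u i)
        = f ((x + lam 0 • u 0) + ∑ i : Fin n, lam i.succ • u i.succ) := by
          rw [Fin.sum_univ_succ, add_assoc]
      _ = ∑ β ∈ Fintype.piFinset (fun _ => range (m + 1)),
            _root_.iterFwdDiff (fun i => u i.succ) β f (x + lam 0 • u 0) *
              ∏ i, genBinom (lam i.succ) (β i) := ih hf hc _ _ _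
      _ = ∑ β ∈ Fintype.piFinset (fun _ => range (m + 1)), ∑ k ∈ range (m + 1),
            _root_.iterFwdDiff u (Fin.cons k β) f x *
              ∏ i, genBinom (lam i) ((Fin.cons k β : Fin (n + 1) → ℕ) i) := by
          refine sum_congr rfl fun β _ => ?_
          rw [(hf.iterFwdDiff _ _).apply_add_smul (hc.iterFwdDiff _ _), sum_mul]
          refine sum_congr rfl fun k _ => ?_
          rw [iterFwdDiff_succ, Fin.prod_univ_succ]
          simp only [Fin.cons_zero, Fin.cons_succ]
          ring
      _ = _ := by rw [sum_comm, Fintype.sum_piFinset_const_succ]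

end FwdDiffDegreeLE

end Topological

/-- Let `f : V → ℝ` be a polynomial of degree `≤ m` on a real vector
space `V` (all `(m+1)`-fold forward differences vanish and the restriction of `f` to every
finite-dimensional subspace is continuous), and let `v₁, …, v_n ∈ V` be linearly
independent.  Then `D^α f(0) = 0` whenever `α₁ + ⋯ + α_n > m`, and for all real
`λ₁, …, λ_n`, `f(λ₁v₁ + ⋯ + λ_n v_n) = Σ_α D^α f(0) · C(λ₁,α₁) ⋯ C(λ_n,α_n)`, the sum
being over a (finite) set of multi-indices containing all `α` with `α₁ + ⋯ + α_n ≤ m`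
(all other terms vanish). -/
theorem stmt11 {V : Type*} [AddCommGroup V] [Module ℝ V] (m : ℕ) (f : V → ℝ)
    (hdiff : ∀ v : Fin (m + 1) → V, ∀ x : V, ((List.ofFn v).foldr fwdDiffOp f) x = 0)
    (hcont : ∀ (k : ℕ) (ι : (Fin k → ℝ) →ₗ[ℝ] V), Function.Injective ι →
      Continuous (f ∘ ι))
    (n : ℕ) (v : Fin n → V) (hv : LinearIndependent ℝ v) :
    (∀ α : Fin n → ℕ, m < ∑ i, α i → iterFwdDiff v α f 0 = 0) ∧
    (∀ lam : Fin n → ℝ,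
      f (∑ i, lam i • v i) =
        ∑ α ∈ Fintype.piFinset (fun _ : Fin n => Finset.range (m + 1)),
          iterFwdDiff v α f 0 * ∏ i, genBinom (lam i) (α i)) := by
  have hf : FwdDiffDegreeLE m f := fwdDiffDegreeLE_of_forall_ofFn hdiff
  refine ⟨fun α hα => congrFun (hf.iterFwdDiff_eq_zero v α hα) 0, fun lam => ?_⟩
  set ι := Fintype.linearCombination ℝ v
  have hexp := (hf.comp ι).apply_add_sum_smul
    (hcont n ι hv.fintypeLinearCombination_injective) 0 (fun i => Pi.single i 1) lam
  have hι : (ι ∘ fun i => Pi.single i 1) = v := funext fun i => by simp [ι]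
  simp only [iterFwdDiff_comp, hι, Function.comp_apply, map_zero, zero_add] at hexp
  simpa [ι, Fintype.linearCombination_apply] using hexp
end
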